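/- Suppose x, y, u, v ∈ ℝ satisfy v² + y² = (x² + u²)² and vu + yx = 0 and vx − yu ≥ 0. Then yu ≤ 0 and vx ≥ 0; moreover u = 0 if and only if y = 0, and v = 0 if and only if x = 0. -/

import Mathlib

/-!
Read `z = x + iu` and `w = v + iy`. The hypotheses say `|w| = |z|²` and that `wz = (vx - yu) + i(vu + yx)`
is a nonnegative real, hence `wz = |z|³`. So `w = |z| z̄`, i.e. `v = |z| x` and `y = -|z| u`, from which
all the sign conditions can be read off.
-/

open Real

lemma sqrt_sq_add_sq_mul_self_eq_zero_iff {a b : ℝ} : √(a ^ 2 + b ^ 2) * a = 0 ↔ a = 0 := by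
  refine ⟨fun h => ?_, fun h => by rw [h, mul_zero]⟩
  rcases mul_eq_zero.mp h with hr | ha
  · have : a ^ 2 + b ^ 2 = 0 := (sqrt_eq_zero (by positivity)).mp hr
    nlinarith [sq_nonneg a, sq_nonneg b]
  · exact ha

theorem harvey_lawson_eq_sqrt_mul {x y u v : ℝ}
    (h1 : v ^ 2 + y ^ 2 = (x ^ 2 + u ^ 2) ^ 2)
    (h2 : v * u + y * x = 0)
    (h3 : v * x - y * u ≥ 0) :
    v = √(x ^ 2 + u ^ 2) * x ∧ y = -(√(x ^ 2 + u ^ 2) * u) := by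
  set r := √(x ^ 2 + u ^ 2)
  have hr_sq : r ^ 2 = x ^ 2 + u ^ 2 := sq_sqrt (by positivity)
  have h_real : v * x - y * u = r ^ 3 := by
    -- Lagrange's identity `|wz|² = |w|²|z|²`
    have : (v * x - y * u) ^ 2 = (r ^ 3) ^ 2 := by
      linear_combination (x ^ 2 + u ^ 2) * h1 - h2 * (v * u + y * x)
        - (r ^ 4 + r ^ 2 * (x ^ 2 + u ^ 2) + (x ^ 2 + u ^ 2) ^ 2) * hr_sq
    exact (sq_eq_sq₀ h3 (by positivity)).mp this
  have h_dist : (v - r * x) ^ 2 + (y + r * u) ^ 2 = 0 := by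
    linear_combination h1 - 2 * r * h_real - (x ^ 2 + u ^ 2 + 2 * r ^ 2) * hr_sq
  obtain ⟨hv, hy⟩ := (add_eq_zero_iff_of_nonneg (sq_nonneg _) (sq_nonneg _)).mp h_dist
  exact ⟨by linarith [pow_eq_zero_iff two_ne_zero |>.mp hv],
    by linarith [pow_eq_zero_iff two_ne_zero |>.mp hy]⟩

theorem harvey_lawson_signs (x y u v : ℝ)
    (h1 : v ^ 2 + y ^ 2 = (x ^ 2 + u ^ 2) ^ 2)
    (h2 : v * u + y * x = 0)
    (h3 : v * x - y * u ≥ 0) :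
    y * u ≤ 0 ∧ v * x ≥ 0 ∧ (u = 0 ↔ y = 0) ∧ (v = 0 ↔ x = 0) := by
  obtain ⟨hv, hy⟩ := harvey_lawson_eq_sqrt_mul h1 h2 h3
  have hr : 0 ≤ √(x ^ 2 + u ^ 2) := sqrt_nonneg _
  refine ⟨?_, ?_, ?_, ?_⟩
  · rw [hy, neg_mul, mul_assoc, neg_nonpos]
    exact mul_nonneg hr (mul_self_nonneg u)
  · rw [hv, mul_assoc]
    exact mul_nonneg hr (mul_self_nonneg x)
  · rw [hy, neg_eq_zero, add_comm, sqrt_sq_add_sq_mul_self_eq_zero_iff]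
  · rw [hv, sqrt_sq_add_sq_mul_self_eq_zero_iff]
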